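/- Let {I_u, J_u}_{u∈V} be a nest representation of a finite digraph D = (V,E) in which every interval has positive length, let p_v ∈ J_v be pairwise distinct points, and order V by u ≤ v iff p_u ≤ p_v. Then for all vertices u ≤ v ≤ w ≤ z, if uz ∈ E and vw ∈ E, then uw ∈ E or vz ∈ E. -/

import Mathlib

/-- A nest representation of a digraph `E`: closed bounded (nonempty) real intervals
`I_u = [aI u, bI u]` and `J_u = [aJ u, bJ u]` with `J_u ⊆ I_u` for every vertex `u`,
such that `u → v` is an arc iff `I_u ∩ J_v ≠ ∅`. -/
def IsNestRepresentation {V : Type*} (E : V → V → Prop)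
    (aI bI aJ bJ : V → ℝ) : Prop :=
  (∀ u, aI u ≤ bI u) ∧ (∀ u, aJ u ≤ bJ u) ∧
  (∀ u, Set.Icc (aJ u) (bJ u) ⊆ Set.Icc (aI u) (bI u)) ∧
  (∀ u v, E u v ↔ (Set.Icc (aI u) (bI u) ∩ Set.Icc (aJ v) (bJ v)).Nonempty)

/-- An interval nest digraph is one admitting a nest representation. -/
def IsIntervalNestDigraph {V : Type*} (E : V → V → Prop) : Prop :=
  ∃ aI bI aJ bJ : V → ℝ, IsNestRepresentation E aI bI aJ bJ

/-- The arc `uv` is symmetric: both `uv` and `vu` are arcs. -/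
def SymArc {V : Type*} (E : V → V → Prop) (u v : V) : Prop := E u v ∧ E v u

/-- A nest ordering of a digraph `E`: a linear order `le` on the vertices such that
for all `u ≤ v ≤ w ≤ z` (repetitions allowed) properties (i), (ii), (iii) hold. -/
def IsNestOrdering {V : Type*} (E : V → V → Prop) (le : V → V → Prop) : Prop :=
  IsLinearOrder V le ∧
  ∀ u v w z : V, le u v → le v w → le w z →
    ((E u w ∧ E u z → E u v ∨ (SymArc E v w ∧ SymArc E v z ∧ SymArc E w z)) ∧
     (E z u ∧ E z v → E z w ∨ (SymArc E w u ∧ SymArc E v u ∧ SymArc E w v)) ∧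
     (E u z ∧ E v w → E u w ∨ E v z) ∧
     (E z u ∧ E w v → E z v ∨ E w u) ∧
     (E u w ∧ E v z → E v w ∨ E u z) ∧
     (E z v ∧ E w u → E z u ∨ E w v))

/-! If `J_w` starts no later than `I_u` ends, then `I_u` meets `J_w`, because `I_u` reaches left
to `p u ≤ p w ≤ bJ w`. Otherwise `aJ z ≤ bI u < aJ w ≤ bI v`, the outer inequalities coming from
the arcs `uz` and `vw`, and `I_v` meets `J_z` in the same way. -/

namespace IsNestRepresentation

variable {V : Type*} {E : V → V → Prop} {aI bI aJ bJ : V → ℝ}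

theorem arc_iff (h : IsNestRepresentation E aI bI aJ bJ) (u v : V) :
    E u v ↔ aI u ≤ bJ v ∧ aJ v ≤ bI u := by
  rw [h.2.2.2, Set.Icc_inter_Icc, Set.nonempty_Icc, sup_le_iff, le_inf_iff, le_inf_iff]
  simp only [h.1 u, h.2.1 v, true_and, and_true]

theorem arc_of_le_of_mem (h : IsNestRepresentation E aI bI aJ bJ) {u v : V} {x y : ℝ}
    (hx : x ∈ Set.Icc (aJ u) (bJ u)) (hy : y ∈ Set.Icc (aJ v) (bJ v)) (hxy : x ≤ y)
    (hvu : aJ v ≤ bI u) : E u v :=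
  (h.arc_iff u v).2 ⟨(h.2.2.1 u hx).1.trans (hxy.trans hy.2), hvu⟩

end IsNestRepresentation

theorem nest_point_order_property_ii_general
    {V : Type*} (E : V → V → Prop)
    (aI bI aJ bJ : V → ℝ)
    (hrep : IsNestRepresentation E aI bI aJ bJ)
    (p : V → ℝ) (hp : ∀ v, p v ∈ Set.Icc (aJ v) (bJ v)) :
    ∀ u v w z : V, p u ≤ p v → p v ≤ p w → p w ≤ p z →
      E u z → E v w → E u w ∨ E v z := by
  intro u v w z huv hvw hwz huz hvw'
  rcases le_or_gt (aJ w) (bI u) with hwu | huw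
  · exact .inl (hrep.arc_of_le_of_mem (hp u) (hp w) (huv.trans hvw) hwu)
  · have hzu := ((hrep.arc_iff u z).1 huz).2
    have hwv := ((hrep.arc_iff v w).1 hvw').2
    exact .inr (hrep.arc_of_le_of_mem (hp v) (hp z) (hvw.trans hwz) (hzu.trans (huw.le.trans hwv)))

/-- In a nest representation with positive-length intervals, ordering vertices by
chosen pairwise distinct points `p v ∈ J_v`: if `u ≤ v ≤ w ≤ z`, `uz ∈ E` and
`vw ∈ E`, then `uw ∈ E` or `vz ∈ E`. -/
theorem nest_point_order_property_ii
    {V : Type*} [Fintype V] (E : V → V → Prop)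
    (aI bI aJ bJ : V → ℝ)
    (hrep : IsNestRepresentation E aI bI aJ bJ)
    (hposI : ∀ u, aI u < bI u) (hposJ : ∀ u, aJ u < bJ u)
    (p : V → ℝ) (hp : ∀ v, p v ∈ Set.Icc (aJ v) (bJ v))
    (hinj : Function.Injective p) :
    ∀ u v w z : V, p u ≤ p v → p v ≤ p w → p w ≤ p z →
      E u z → E v w → E u w ∨ E v z :=
  nest_point_order_property_ii_general E aI bI aJ bJ hrep p hp
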